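/- arXiv:2303.17749 — 10 statements merged into one kernel-verified Lean document; each statement's English description precedes it below -/
import Mathlib

section
/- The function f(v) = (Σ_{x=1}^d √(q_x v_x))² is concave on the probability simplex, where q is a fixed probability vector of dimension d. -/
lemma sqrt_tri (a b c e : ℝ) :
    Real.sqrt ((a + c) ^ 2 + (b + e) ^ 2)
      ≤ Real.sqrt (a ^ 2 + b ^ 2) + Real.sqrt (c ^ 2 + e ^ 2) := by
  have h1 : a * c + b * e ≤ Real.sqrt (a ^ 2 + b ^ 2) * Real.sqrt (c ^ 2 + e ^ 2) := by
    rw [← Real.sqrt_mul (by positivity)]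
    calc a * c + b * e ≤ |a * c + b * e| := le_abs_self _
      _ = Real.sqrt ((a * c + b * e) ^ 2) := by rw [Real.sqrt_sq_eq_abs]
      _ ≤ Real.sqrt ((a ^ 2 + b ^ 2) * (c ^ 2 + e ^ 2)) := by
          apply Real.sqrt_le_sqrt; nlinarith [sq_nonneg (a * e - b * c)]
  rw [Real.sqrt_le_iff]
  refine ⟨by positivity, ?_⟩
  have ha := Real.sq_sqrt (show (0:ℝ) ≤ a ^ 2 + b ^ 2 by positivity)
  have hc := Real.sq_sqrt (show (0:ℝ) ≤ c ^ 2 + e ^ 2 by positivity)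
  nlinarith

lemma sqrt_tri_sum {ι : Type*} [DecidableEq ι] (s : Finset ι) (f g : ι → ℝ) :
    Real.sqrt ((∑ i ∈ s, f i) ^ 2 + (∑ i ∈ s, g i) ^ 2)
      ≤ ∑ i ∈ s, Real.sqrt (f i ^ 2 + g i ^ 2) := by
  induction s using Finset.induction with
  | empty => simp
  | @insert a s h ih =>
      rw [Finset.sum_insert h, Finset.sum_insert h, Finset.sum_insert h]
      calc Real.sqrt ((f a + ∑ i ∈ s, f i) ^ 2 + (g a + ∑ i ∈ s, g i) ^ 2)
          ≤ Real.sqrt (f a ^ 2 + g a ^ 2)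
            + Real.sqrt ((∑ i ∈ s, f i) ^ 2 + (∑ i ∈ s, g i) ^ 2) := sqrt_tri _ _ _ _
        _ ≤ _ := by linarith

theorem concave_fidelity_sq (d : ℕ) (hd : 1 ≤ d) (q : Fin d → ℝ)
    (hq0 : ∀ x, 0 ≤ q x) (hq1 : ∑ x, q x = 1)
    (v w : Fin d → ℝ) (hv0 : ∀ x, 0 ≤ v x) (hv1 : ∑ x, v x = 1)
    (hw0 : ∀ x, 0 ≤ w x) (hw1 : ∑ x, w x = 1)
    (t : ℝ) (ht0 : 0 ≤ t) (ht1 : t ≤ 1) :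
    t * (∑ x, Real.sqrt (q x * v x)) ^ 2 + (1 - t) * (∑ x, Real.sqrt (q x * w x)) ^ 2
      ≤ (∑ x, Real.sqrt (q x * (t * v x + (1 - t) * w x))) ^ 2 := by
  set A := ∑ x, Real.sqrt (q x * v x) with hA
  set B := ∑ x, Real.sqrt (q x * w x) with hB
  have hA0 : 0 ≤ A := Finset.sum_nonneg fun x _ => Real.sqrt_nonneg _
  have hB0 : 0 ≤ B := Finset.sum_nonneg fun x _ => Real.sqrt_nonneg _
  have ht1' : 0 ≤ 1 - t := by linarith
  have key : Real.sqrt (t * A ^ 2 + (1 - t) * B ^ 2)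
      ≤ ∑ x, Real.sqrt (q x * (t * v x + (1 - t) * w x)) := by
    have h1 : ∀ x, Real.sqrt (q x * (t * v x + (1 - t) * w x))
        = Real.sqrt ((Real.sqrt t * Real.sqrt (q x * v x)) ^ 2
          + (Real.sqrt (1 - t) * Real.sqrt (q x * w x)) ^ 2) := by
      intro x
      rw [mul_pow, mul_pow, Real.sq_sqrt ht0, Real.sq_sqrt ht1',
        Real.sq_sqrt (mul_nonneg (hq0 x) (hv0 x)),
        Real.sq_sqrt (mul_nonneg (hq0 x) (hw0 x))]
      ring_nf
    have h2 : t * A ^ 2 + (1 - t) * B ^ 2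
        = (∑ x, Real.sqrt t * Real.sqrt (q x * v x)) ^ 2
          + (∑ x, Real.sqrt (1 - t) * Real.sqrt (q x * w x)) ^ 2 := by
      rw [← Finset.mul_sum, ← Finset.mul_sum, mul_pow, mul_pow,
        Real.sq_sqrt ht0, Real.sq_sqrt ht1', ← hA, ← hB]
    rw [h2]
    calc _ ≤ ∑ x, Real.sqrt ((Real.sqrt t * Real.sqrt (q x * v x)) ^ 2
          + (Real.sqrt (1 - t) * Real.sqrt (q x * w x)) ^ 2) := sqrt_tri_sum _ _ _
      _ = _ := by
          apply Finset.sum_congr rfl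
          intro x _
          exact (h1 x).symm
  have h3 : 0 ≤ t * A ^ 2 + (1 - t) * B ^ 2 := by positivity
  calc t * A ^ 2 + (1 - t) * B ^ 2
      = Real.sqrt (t * A ^ 2 + (1 - t) * B ^ 2) ^ 2 := (Real.sq_sqrt h3).symm
    _ ≤ _ := by
        apply pow_le_pow_left₀ (Real.sqrt_nonneg _) key
end

section
/- Let f, g be continuous positive functions on [a,b] such that f/g is non-decreasing on [a,b]. Then for every x₁ with a < x₁ < b, (∫_a^b f)·(∫_a^{x₁} g) ≥ (∫_a^{x₁} f)·(∫_a^b g). -/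
theorem integral_ratio_ineq (a b : ℝ) (hab : a < b) (f g : ℝ → ℝ)
    (hf : ContinuousOn f (Set.Icc a b)) (hg : ContinuousOn g (Set.Icc a b))
    (hfpos : ∀ x ∈ Set.Icc a b, 0 < f x) (hgpos : ∀ x ∈ Set.Icc a b, 0 < g x)
    (hmono : MonotoneOn (fun x => f x / g x) (Set.Icc a b))
    (x₁ : ℝ) (hx₁ : a < x₁) (hx₁b : x₁ < b) :
    (∫ x in a..x₁, f x) * (∫ x in a..b, g x)
      ≤ (∫ x in a..b, f x) * (∫ x in a..x₁, g x) := by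
  have hx₁m : x₁ ∈ Set.Icc a b := ⟨hx₁.le, hx₁b.le⟩
  set r : ℝ := f x₁ / g x₁ with hr
  have hsub1 : Set.uIcc a x₁ ⊆ Set.Icc a b := by
    rw [Set.uIcc_of_le hx₁.le]
    exact Set.Icc_subset_Icc le_rfl hx₁b.le
  have hsub2 : Set.uIcc x₁ b ⊆ Set.Icc a b := by
    rw [Set.uIcc_of_le hx₁b.le]
    exact Set.Icc_subset_Icc hx₁.le le_rfl
  have hfint1 : IntervalIntegrable f MeasureTheory.volume a x₁ :=
    (hf.mono hsub1).intervalIntegrable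
  have hfint2 : IntervalIntegrable f MeasureTheory.volume x₁ b :=
    (hf.mono hsub2).intervalIntegrable
  have hgint1 : IntervalIntegrable g MeasureTheory.volume a x₁ :=
    (hg.mono hsub1).intervalIntegrable
  have hgint2 : IntervalIntegrable g MeasureTheory.volume x₁ b :=
    (hg.mono hsub2).intervalIntegrable
  have hFsplit : (∫ x in a..b, f x) = (∫ x in a..x₁, f x) + ∫ x in x₁..b, f x :=
    (intervalIntegral.integral_add_adjacent_intervals hfint1 hfint2).symm
  have hGsplit : (∫ x in a..b, g x) = (∫ x in a..x₁, g x) + ∫ x in x₁..b, g x :=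
    (intervalIntegral.integral_add_adjacent_intervals hgint1 hgint2).symm
  have h1 : (∫ x in a..x₁, f x) ≤ ∫ x in a..x₁, r * g x := by
    apply intervalIntegral.integral_mono_on hx₁.le hfint1
      (hgint1.const_mul r)
    intro x hx
    have hxm : x ∈ Set.Icc a b := ⟨hx.1, hx.2.trans hx₁b.le⟩
    have hgx := hgpos x hxm
    have hle : f x / g x ≤ r := hmono hxm hx₁m hx.2
    calc f x = (f x / g x) * g x := by field_simp
    _ ≤ r * g x := by nlinarith
  have h2 : (∫ x in x₁..b, r * g x) ≤ ∫ x in x₁..b, f x := by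
    apply intervalIntegral.integral_mono_on hx₁b.le (hgint2.const_mul r) hfint2
    intro x hx
    have hxm : x ∈ Set.Icc a b := ⟨hx₁.le.trans hx.1, hx.2⟩
    have hgx := hgpos x hxm
    have hle : r ≤ f x / g x := hmono hx₁m hxm hx.1
    calc r * g x ≤ (f x / g x) * g x := by nlinarith
    _ = f x := by field_simp
  rw [intervalIntegral.integral_const_mul] at h1 h2
  have hG1 : 0 ≤ ∫ x in a..x₁, g x := by
    apply intervalIntegral.integral_nonneg hx₁.le
    intro x hx
    exact (hgpos x ⟨hx.1, hx.2.trans hx₁b.le⟩).le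
  have hG2 : 0 ≤ ∫ x in x₁..b, g x := by
    apply intervalIntegral.integral_nonneg hx₁b.le
    intro x hx
    exact (hgpos x ⟨hx₁.le.trans hx.1, hx.2⟩).le
  rw [hFsplit, hGsplit]
  nlinarith [mul_le_mul_of_nonneg_right h1 hG2, mul_le_mul_of_nonneg_right h2 hG1]
end

section
/- Let p, q be non-increasing probability vectors of dimension d, and suppose q does not majorize p and p ≠ e₁ (the vector (1,0,...,0)). Let δ = max_{n∈[d]} Σ_{x=1}^n (p_x - q_x). Then 0 < δ < 1 - q₁. -/
/-!
Every partial difference `∑_{x<n} (p x - q x)` is at most `1 - q 0`, since `∑_{x<n} p x ≤ 1` and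
`∑_{x<n} q x ≥ q 0`. Equality forces `∑_{x<n} p x = 1` and `∑_{x<n} q x = q 0`: for `n = 1` this
says `p = e₁`, and for `n ≥ 2` it gives `q 1 = 0`, hence (as `q` is non-increasing) `q = e₁`,
which majorizes every `p`. Positivity is just the failure of majorization.
-/

open Finset

lemma monotone_sum_range_of_nonneg {f : ℕ → ℝ} (hf : ∀ x, 0 ≤ f x) :
    Monotone fun n => ∑ x ∈ range n, f x :=
  (sum_mono_set_of_nonneg hf).comp range_mono

lemma sum_range_succ_eq_head_iff {f : ℕ → ℝ} (hf : ∀ x, 0 ≤ f x) (n : ℕ) :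
    ∑ x ∈ range (n + 1), f x = f 0 ↔ ∀ x < n, f (x + 1) = 0 := by
  rw [sum_range_succ', add_eq_right, sum_eq_zero_iff_of_nonneg fun x _ => hf (x + 1)]
  simp only [mem_range]

lemma eq_single_zero_of_sum_range_eq_head {f : ℕ → ℝ} (hf : ∀ x, 0 ≤ f x) {d : ℕ}
    (h : ∑ x ∈ range d, f x = f 0) : ∀ x < d, f x = if x = 0 then f 0 else 0 := by
  obtain _ | d := d
  · simp
  rintro (_ | x) hx
  · simp
  · simpa using (sum_range_succ_eq_head_iff hf d).1 h x (by omega)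

lemma sum_range_eq_head_of_apply_one_eq_zero {q : ℕ → ℝ} (hq0 : ∀ x, 0 ≤ q x) {d : ℕ}
    (hd : 0 < d) (hqmono : ∀ i j, i ≤ j → j < d → q j ≤ q i) (hq : q 1 = 0) :
    ∑ x ∈ range d, q x = q 0 := by
  obtain ⟨d, rfl⟩ := Nat.exists_eq_add_of_lt hd
  rw [zero_add]
  refine (sum_range_succ_eq_head_iff hq0 d).2 fun x hx => ?_
  exact le_antisymm (hq ▸ hqmono 1 (x + 1) (by omega) (by omega)) (hq0 _)

lemma sum_range_sub_sum_range_lt_one_sub (d : ℕ) (p q : ℕ → ℝ)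
    (hp0 : ∀ x, 0 ≤ p x) (hq0 : ∀ x, 0 ≤ q x)
    (hp1 : ∑ x ∈ range d, p x = 1) (hq1 : ∑ x ∈ range d, q x = 1)
    (hqmono : ∀ i j, i ≤ j → j < d → q j ≤ q i)
    (hnmaj : ¬ ∀ k ∈ Icc 1 d, ∑ x ∈ range k, p x ≤ ∑ x ∈ range k, q x)
    (hpne : ¬ ∀ x < d, p x = if x = 0 then (1 : ℝ) else 0)
    {n : ℕ} (hn : n ∈ Icc 1 d) :
    ∑ x ∈ range n, p x - ∑ x ∈ range n, q x < 1 - q 0 := by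
  obtain ⟨hn1, hnd⟩ := mem_Icc.1 hn
  have hq_head : ∀ k, 1 ≤ k → q 0 ≤ ∑ x ∈ range k, q x := fun k hk => by
    simpa using monotone_sum_range_of_nonneg hq0 hk
  have hp_le : ∀ k ≤ d, ∑ x ∈ range k, p x ≤ 1 := fun k hk =>
    hp1 ▸ monotone_sum_range_of_nonneg hp0 hk
  by_contra! hge
  have hpn : ∑ x ∈ range n, p x = 1 := by linarith [hq_head n hn1, hp_le n hnd]
  have hqn : ∑ x ∈ range n, q x = q 0 := by linarith [hq_head n hn1, hp_le n hnd]
  obtain rfl | ⟨m, rfl⟩ : n = 1 ∨ ∃ m, n = m + 2 := by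
    rcases n with _ | _ | m <;> simp_all
  · apply hpne
    have hp_head : p 0 = 1 := by simpa using hpn
    simpa [hp_head] using eq_single_zero_of_sum_range_eq_head hp0 (hp1.trans hp_head.symm)
  · have hq_one : q 1 = 0 := (sum_range_succ_eq_head_iff hq0 (m + 1)).1 hqn 0 (by omega)
    have hq_head_one : q 0 = 1 :=
      (sum_range_eq_head_of_apply_one_eq_zero hq0 (by omega) hqmono hq_one).symm.trans hq1
    refine hnmaj fun k hk => ?_
    obtain ⟨hk1, hkd⟩ := mem_Icc.1 hk
    linarith [hq_head k hk1, hp_le k hkd]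

theorem delta_bounds_general (d : ℕ) (hd : 1 ≤ d) (p q : ℕ → ℝ)
    (hp0 : ∀ x, 0 ≤ p x) (hq0 : ∀ x, 0 ≤ q x)
    (hp1 : ∑ x ∈ Finset.range d, p x = 1) (hq1 : ∑ x ∈ Finset.range d, q x = 1)
    (hqmono : ∀ i j, i ≤ j → j < d → q j ≤ q i)
    (hnmaj : ¬ ∀ k ∈ Finset.Icc 1 d,
        ∑ x ∈ Finset.range k, p x ≤ ∑ x ∈ Finset.range k, q x)
    (hpne : ¬ ∀ x < d, p x = if x = 0 then (1 : ℝ) else 0) :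
    0 < (Finset.Icc 1 d).sup' (Finset.nonempty_Icc.mpr hd)
          (fun n => ∑ x ∈ Finset.range n, (p x - q x)) ∧
    (Finset.Icc 1 d).sup' (Finset.nonempty_Icc.mpr hd)
          (fun n => ∑ x ∈ Finset.range n, (p x - q x)) < 1 - q 0 := by
  simp only [sum_sub_distrib]
  constructor
  · obtain ⟨k, hk, hlt⟩ := not_forall₂.1 hnmaj
    exact (sub_pos.2 (not_le.1 hlt)).trans_le
      (le_sup' (fun n => ∑ x ∈ range n, p x - ∑ x ∈ range n, q x) hk)
  · exact (sup'_lt_iff _).2 fun n hn =>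
      sum_range_sub_sum_range_lt_one_sub d p q hp0 hq0 hp1 hq1 hqmono hnmaj hpne hn

theorem delta_bounds (d : ℕ) (hd : 1 ≤ d) (p q : ℕ → ℝ)
    (hp0 : ∀ x, 0 ≤ p x) (hq0 : ∀ x, 0 ≤ q x)
    (hp1 : ∑ x ∈ Finset.range d, p x = 1) (hq1 : ∑ x ∈ Finset.range d, q x = 1)
    (hpmono : ∀ i j, i ≤ j → j < d → p j ≤ p i)
    (hqmono : ∀ i j, i ≤ j → j < d → q j ≤ q i)
    (hnmaj : ¬ ∀ k ∈ Finset.Icc 1 d,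
        ∑ x ∈ Finset.range k, p x ≤ ∑ x ∈ Finset.range k, q x)
    (hpne : ¬ ∀ x < d, p x = if x = 0 then (1 : ℝ) else 0) :
    0 < (Finset.Icc 1 d).sup' (Finset.nonempty_Icc.mpr hd)
          (fun n => ∑ x ∈ Finset.range n, (p x - q x)) ∧
    (Finset.Icc 1 d).sup' (Finset.nonempty_Icc.mpr hd)
          (fun n => ∑ x ∈ Finset.range n, (p x - q x)) < 1 - q 0 :=
  delta_bounds_general d hd p q hp0 hq0 hp1 hq1 hqmono hnmaj hpne
end

section
/- Let p, q be non-increasing probability vectors of dimension d. Then min over non-increasing probability vectors r majorizing p of the total variation distance satisfies min_{r ≻ p} ½‖q−r‖₁ = max_{n∈[d]} Σ_{x=1}^n (p_x − q_x), and this maximum is always ≥ 0 (the term n = d equals 0). -/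
private lemma min_concave_step (a b c : ℝ) (hab : a ≤ b) (hbc : b ≤ c) (h : a + c ≤ 2*b) :
    min c 1 - min b 1 ≤ min b 1 - min a 1 := by
  simp only [min_def]; split_ifs <;> linarith

theorem star_conversion_distance_closed_form (d : ℕ) (hd : 1 ≤ d) (p q : ℕ → ℝ)
    (hp0 : ∀ x, 0 ≤ p x) (hq0 : ∀ x, 0 ≤ q x)
    (hp1 : ∑ x ∈ Finset.range d, p x = 1) (hq1 : ∑ x ∈ Finset.range d, q x = 1)
    (hpmono : ∀ i j, i ≤ j → j < d → p j ≤ p i)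
    (hqmono : ∀ i j, i ≤ j → j < d → q j ≤ q i) :
    IsLeast
      {ε : ℝ | ∃ r : ℕ → ℝ, (∀ x, 0 ≤ r x) ∧ (∑ x ∈ Finset.range d, r x = 1) ∧
        (∀ i j, i ≤ j → j < d → r j ≤ r i) ∧
        (∀ k ∈ Finset.Icc 1 d,
          ∑ x ∈ Finset.range k, p x ≤ ∑ x ∈ Finset.range k, r x) ∧
        ε = (∑ x ∈ Finset.range d, |q x - r x|) / 2}
      ((Finset.Icc 1 d).sup' (Finset.nonempty_Icc.mpr hd)
        (fun n => ∑ x ∈ Finset.range n, (p x - q x))) := by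
  set M := (Finset.Icc 1 d).sup' (Finset.nonempty_Icc.mpr hd)
      (fun n => ∑ x ∈ Finset.range n, (p x - q x)) with hMdef
  set Q : ℕ → ℝ := fun k => ∑ x ∈ Finset.range k, q x with hQdef
  have hQmono : ∀ a b : ℕ, a ≤ b → Q a ≤ Q b := fun a b hab =>
    Finset.sum_le_sum_of_subset_of_nonneg (Finset.range_subset_range.mpr hab) (fun i _ _ => hq0 i)
  have hQd : Q d = 1 := hq1
  have hQ0 : ∀ k, 0 ≤ Q k := fun k => Finset.sum_nonneg (fun i _ => hq0 i)
  have hPle1 : ∀ k, k ≤ d → (∑ x ∈ Finset.range k, p x) ≤ 1 := by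
    intro k hk
    calc (∑ x ∈ Finset.range k, p x)
        ≤ ∑ x ∈ Finset.range d, p x :=
          Finset.sum_le_sum_of_subset_of_nonneg (Finset.range_subset_range.mpr hk) (fun i _ _ => hp0 i)
      _ = 1 := hp1
  have hMk : ∀ k, 1 ≤ k → k ≤ d → (∑ x ∈ Finset.range k, p x) - Q k ≤ M := by
    intro k h1 h2
    have := Finset.le_sup' (f := fun n => ∑ x ∈ Finset.range n, (p x - q x))
      (Finset.mem_Icc.mpr ⟨h1, h2⟩)
    rw [Finset.sum_sub_distrib] at this
    exact this
  have hM0 : 0 ≤ M := by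
    have := hMk d hd le_rfl
    rw [hp1, hQd] at this; linarith
  have hM1 : M ≤ 1 - Q 1 := by
    obtain ⟨n, hn, hMn⟩ := Finset.exists_mem_eq_sup' (Finset.nonempty_Icc.mpr hd)
      (fun n => ∑ x ∈ Finset.range n, (p x - q x))
    rw [Finset.mem_Icc] at hn
    rw [← hMdef] at hMn
    have h1 : (∑ x ∈ Finset.range n, (p x - q x))
        = (∑ x ∈ Finset.range n, p x) - Q n := Finset.sum_sub_distrib _ _
    have h2 := hPle1 n hn.2
    have h3 := hQmono 1 n hn.1
    rw [hMn, h1]; linarith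
  set R : ℕ → ℝ := fun k => if k = 0 then 0 else min (Q k + M) 1 with hRdef
  have hRk : ∀ k, 1 ≤ k → R k = min (Q k + M) 1 := by
    intro k hk; simp [hRdef, Nat.one_le_iff_ne_zero.mp hk]
  have hR0 : R 0 = 0 := by simp [hRdef]
  have hRmono : ∀ a b : ℕ, a ≤ b → R a ≤ R b := by
    intro a b hab
    rcases Nat.eq_zero_or_pos a with rfl | ha
    · rw [hR0]
      rcases Nat.eq_zero_or_pos b with rfl | hb
      · rw [hR0]
      · rw [hRk b hb]; exact le_min (by have := hQ0 b; linarith) one_pos.le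
    · rw [hRk a ha, hRk b (ha.trans_le hab)]
      exact min_le_min (by have := hQmono a b hab; linarith) le_rfl
  have hRd : R d = 1 := by
    rw [hRk d hd, hQd]; simp [min_eq_right]; linarith
  have hD : ∀ k, 1 ≤ k → R k - Q k = min M (1 - Q k) := by
    intro k hk
    rw [hRk k hk]
    simp only [min_def]; split_ifs <;> linarith
  set r : ℕ → ℝ := fun x => if x < d then R (x+1) - R x else 0 with hrdef
  have hrx : ∀ x, x < d → r x = R (x+1) - R x := by
    intro x hx; simp [hrdef, hx]
  have hr0 : ∀ x, 0 ≤ r x := by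
    intro x
    by_cases hx : x < d
    · rw [hrx x hx]; have := hRmono x (x+1) (Nat.le_succ x); linarith
    · simp [hrdef, hx]
  have hrsum : ∀ k, k ≤ d → (∑ x ∈ Finset.range k, r x) = R k := by
    intro k hk
    have : (∑ x ∈ Finset.range k, r x) = ∑ x ∈ Finset.range k, (R (x+1) - R x) := by
      apply Finset.sum_congr rfl
      intro x hx
      exact hrx x (lt_of_lt_of_le (Finset.mem_range.mp hx) hk)
    rw [this, Finset.sum_range_sub, hR0, sub_zero]
  have hrsum1 : (∑ x ∈ Finset.range d, r x) = 1 := by rw [hrsum d le_rfl, hRd]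
  -- adjacent monotonicity
  have hstep : ∀ x, x + 1 < d → r (x+1) ≤ r x := by
    intro x hx
    rw [hrx x (by omega), hrx (x+1) hx]
    rcases Nat.eq_zero_or_pos x with rfl | hxpos
    · -- r 1 ≤ r 0
      rw [hR0, sub_zero, hRk 1 le_rfl, hRk 2 (by omega)]
      have hq01 : q 1 ≤ q 0 := hqmono 0 1 (by omega) hx
      have hQ1 : Q 1 = q 0 := by simp [hQdef]
      have hQ2 : Q 2 = q 0 + q 1 := by
        simp [hQdef, Finset.sum_range_succ]
      have h1 : min (Q 1 + M) 1 = Q 1 + M := min_eq_left (by linarith)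
      have h2 : min (Q 2 + M) 1 ≤ Q 2 + M := min_le_left _ _
      rw [h1]
      have := hq0 1
      rw [hQ1] at *; rw [hQ2] at *
      linarith
    · rw [hRk x hxpos, hRk (x+1) (by omega), hRk (x+2) (by omega)]
      have hQx1 : Q (x+1) = Q x + q x := by simp [hQdef, Finset.sum_range_succ]
      have hQx2 : Q (x+2) = Q (x+1) + q (x+1) := by simp [hQdef, Finset.sum_range_succ]
      have hqm : q (x+1) ≤ q x := hqmono x (x+1) (by omega) hx
      exact min_concave_step (Q x + M) (Q (x+1) + M) (Q (x+2) + M)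
        (by have := hq0 x; linarith) (by have := hq0 (x+1); linarith)
        (by linarith)
  have hrmono : ∀ i j, i ≤ j → j < d → r j ≤ r i := by
    intro i j hij
    induction j, hij using Nat.le_induction with
    | base => intro _; exact le_rfl
    | succ j hj ih =>
      intro hjd
      exact le_trans (hstep j hjd) (ih (by omega))
  have hrmaj : ∀ k ∈ Finset.Icc 1 d, (∑ x ∈ Finset.range k, p x) ≤ ∑ x ∈ Finset.range k, r x := by
    intro k hk
    rw [Finset.mem_Icc] at hk
    rw [hrsum k hk.2, hRk k hk.1]
    exact le_min (by have := hMk k hk.1 hk.2; linarith) (hPle1 k hk.2)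
  have habs : (∑ x ∈ Finset.range d, |q x - r x|) = 2 * M := by
    obtain ⟨m, rfl⟩ : ∃ m, d = m + 1 := ⟨d - 1, by omega⟩
    rw [Finset.sum_range_succ']
    have h0 : |q 0 - r 0| = M := by
      rw [hrx 0 (by omega), hR0, sub_zero, hRk 1 le_rfl]
      have hQ1 : Q 1 = q 0 := by simp [hQdef]
      rw [min_eq_left (by linarith), hQ1]
      rw [abs_of_nonpos (by linarith)]; ring
    have hterm : ∀ x ∈ Finset.range m, |q (x+1) - r (x+1)|
        = min M (1 - Q (x+1)) - min M (1 - Q (x+2)) := by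
      intro x hx
      have hxm : x + 1 < m + 1 := by
        have := Finset.mem_range.mp hx; omega
      rw [hrx (x+1) hxm]
      have hq' : q (x+1) = Q (x+2) - Q (x+1) := by
        simp [hQdef, Finset.sum_range_succ]
      have hD1 := hD (x+1) (by omega)
      have hD2 := hD (x+2) (by omega)
      have hmm : min M (1 - Q (x+2)) ≤ min M (1 - Q (x+1)) :=
        min_le_min le_rfl (by have := hQmono (x+1) (x+2) (by omega); linarith)
      rw [abs_of_nonneg (by linarith)]
      linarith
    rw [Finset.sum_congr rfl hterm, Finset.sum_range_sub' (f := fun x => min M (1 - Q (x+1))), h0]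
    have hDd : min M (1 - Q (m+1)) = 0 := by
      rw [hQd]; simp [min_eq_right, hM0]
    have hD1' : min M (1 - Q (0+1)) = M := min_eq_left (by linarith)
    rw [hDd] at *
    simp only [hD1']
    rw [hDd]
    ring
  constructor
  · exact ⟨r, hr0, hrsum1, hrmono, hrmaj, by rw [habs]; ring⟩
  · rintro ε ⟨r', hr'0, hr'1, hr'mono, hr'maj, rfl⟩
    apply Finset.sup'_le
    intro n hn
    rw [Finset.mem_Icc] at hn
    have h1 : (∑ x ∈ Finset.range n, (p x - q x)) ≤ ∑ x ∈ Finset.range n, (r' x - q x) := by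
      rw [Finset.sum_sub_distrib, Finset.sum_sub_distrib]
      have := hr'maj n (Finset.mem_Icc.mpr hn)
      linarith
    have h2 : (∑ x ∈ Finset.range n, (r' x - q x))
        ≤ ∑ x ∈ Finset.range n, ((r' x - q x) + |r' x - q x|) / 2 := by
      apply Finset.sum_le_sum
      intro i _
      have := le_abs_self (r' i - q i)
      linarith
    have h3 : (∑ x ∈ Finset.range n, ((r' x - q x) + |r' x - q x|) / 2)
        ≤ ∑ x ∈ Finset.range d, ((r' x - q x) + |r' x - q x|) / 2 := by
      apply Finset.sum_le_sum_of_subset_of_nonneg (Finset.range_subset_range.mpr hn.2)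
      intro i _ _
      have := neg_abs_le (r' i - q i)
      have := abs_nonneg (r' i - q i)
      linarith
    have h4 : (∑ x ∈ Finset.range d, ((r' x - q x) + |r' x - q x|) / 2)
        = (∑ x ∈ Finset.range d, |q x - r' x|) / 2 := by
      rw [← Finset.sum_div, Finset.sum_add_distrib, Finset.sum_sub_distrib, hr'1, hq1]
      have : (∑ x ∈ Finset.range d, |r' x - q x|) = ∑ x ∈ Finset.range d, |q x - r' x| := by
        apply Finset.sum_congr rfl; intro i _; rw [abs_sub_comm]
      rw [this]; ring
    linarith
end

section
/- Let q be a non-increasing probability vector of dimension d with ½‖q − e₁‖₁ > ε for some ε ∈ [0,1], and let k_ε be the index with Σ_{x=1}^{k_ε} q_x ≤ 1−ε and Σ_{x=1}^{k_ε+1} q_x > 1−ε. Define q̄^(ε) by q̄₁ = q₁+ε, q̄_x = q_x for 2 ≤ x ≤ k_ε, q̄_{k_ε+1} = 1−ε−Σ_{x=1}^{k_ε} q_x, and 0 otherwise. Then q̄^(ε) is a probability vector satisfying ½‖q − q̄^(ε)‖₁ ≤ ε, and q̄^(ε) majorizes every probability vector q' with ½‖q − q'‖₁ ≤ ε. -/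
/-!
Only the mass `ε` may be moved, so every `m` entries of a vector `q'` with `½‖q - q'‖₁ ≤ ε`
carry at most `min (ε + q₁ + ⋯ + q_m) 1`, the first `m` entries being the heaviest ones of the
sorted `q`. The vector `q̄^(ε)` attains this bound for every `m`: it moves `ε` onto the first
entry and removes it from the tail, keeping the head `q₁, …, q_{k_ε}`.
-/

open Finset

theorem sum_le_sum_of_card_eq_of_forall_le {ι κ M : Type*} [AddCommMonoid M] [LinearOrder M]
    [IsOrderedAddMonoid M] {s : Finset ι} {t : Finset κ} {f : ι → M} {g : κ → M}
    (hst : #s = #t) (h : ∀ x ∈ s, ∀ y ∈ t, f x ≤ g y) :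
    ∑ x ∈ s, f x ≤ ∑ y ∈ t, g y := by
  rcases t.eq_empty_or_nonempty with rfl | ht
  · rw [card_empty, card_eq_zero] at hst
    simp [hst]
  calc ∑ x ∈ s, f x ≤ #s • t.inf' ht g :=
        sum_le_card_nsmul _ _ _ fun x hx => le_inf' ht g (h x hx)
    _ = #t • t.inf' ht g := by rw [hst]
    _ ≤ ∑ y ∈ t, g y := card_nsmul_le_sum _ _ _ fun y hy => inf'_le g hy

theorem sum_le_sum_range_card_of_antitoneOn {M : Type*} [AddCommMonoid M] [LinearOrder M]
    [IsOrderedAddMonoid M] {d : ℕ} {q : ℕ → M} (hq : AntitoneOn q (Set.Iio d))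
    {S : Finset ℕ} (hS : S ⊆ range d) :
    ∑ x ∈ S, q x ≤ ∑ x ∈ range #S, q x := by
  have hSd : #S ≤ d := by simpa using card_le_card hS
  rw [← sum_inter_add_sum_sdiff S (range #S), ← sum_inter_add_sum_sdiff (range #S) S,
    inter_comm]
  apply add_le_add_right
  apply sum_le_sum_of_card_eq_of_forall_le
  · exact card_sdiff_comm (card_range _).symm
  · intro x hx y hy
    simp only [mem_sdiff, mem_range] at hx hy
    exact hq (show y < d by omega) (mem_range.mp (hS hx.1)) (by omega)

theorem two_mul_sum_sub_le_sum_abs_sub {ι : Type*} [DecidableEq ι] {s S : Finset ι}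
    {p p' : ι → ℝ} (hS : S ⊆ s)
    (hsum : ∑ x ∈ s, p x = ∑ x ∈ s, p' x) :
    2 * ∑ x ∈ S, (p' x - p x) ≤ ∑ x ∈ s, |p x - p' x| := by
  have hcompl : ∑ x ∈ s \ S, (p x - p' x) = ∑ x ∈ S, (p' x - p x) := by
    have htotal := sum_sdiff hS (f := fun x => p x - p' x)
    simp only [sum_sub_distrib, hsum, sub_self] at htotal ⊢
    linarith
  calc 2 * ∑ x ∈ S, (p' x - p x)
      = ∑ x ∈ S, (p' x - p x) + ∑ x ∈ s \ S, (p x - p' x) := by rw [hcompl]; ring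
    _ ≤ ∑ x ∈ S, |p x - p' x| + ∑ x ∈ s \ S, |p x - p' x| := by
        gcongr with x _ x _
        · exact abs_sub_comm (p x) (p' x) ▸ le_abs_self _
        · exact le_abs_self _
    _ = ∑ x ∈ s, |p x - p' x| := by rw [add_comm, sum_sdiff hS]

theorem sum_range_abs_sub_ite_zero {d : ℕ} {q : ℕ → ℝ} (hq0 : ∀ x, 0 ≤ q x)
    (hq1 : ∑ x ∈ range d, q x = 1) (hd : d ≠ 0) :
    ∑ x ∈ range d, |q x - if x = 0 then 1 else 0| = 2 * (1 - q 0) := by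
  obtain ⟨n, rfl⟩ := Nat.exists_eq_succ_of_ne_zero hd
  rw [sum_range_succ'] at hq1 ⊢
  have hq0le : q 0 ≤ 1 := by linarith [sum_nonneg fun x (_ : x ∈ range n) => hq0 (x + 1)]
  simp only [Nat.add_eq_zero_iff, one_ne_zero, and_false, if_true, if_false, sub_zero,
    abs_of_nonneg (hq0 _), abs_of_nonpos (sub_nonpos.mpr hq0le), neg_sub]
  linarith

/-- The vector `q̄^(ε)` for `k = k_ε`, with indices starting at `0`. -/
noncomputable def steepestApprox (q : ℕ → ℝ) (ε : ℝ) (k : ℕ) : ℕ → ℝ := fun x =>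
  if x = 0 then q 0 + ε
  else if x < k then q x
  else if x = k then 1 - ε - ∑ y ∈ range k, q y
  else 0

namespace steepestApprox

variable {q : ℕ → ℝ} {ε : ℝ} {k : ℕ}

theorem nonneg (hq0 : ∀ x, 0 ≤ q x) (hε : 0 ≤ ε) (hk : ∑ x ∈ range k, q x ≤ 1 - ε) (x : ℕ) :
    0 ≤ steepestApprox q ε k x := by
  unfold steepestApprox
  split_ifs <;> linarith [hq0 0, hq0 x]

theorem sum_range_of_le {m : ℕ} (hm : m ≠ 0) (hmk : m ≤ k) :
    ∑ x ∈ range m, steepestApprox q ε k x = ε + ∑ x ∈ range m, q x := by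
  obtain ⟨n, rfl⟩ := Nat.exists_eq_succ_of_ne_zero hm
  have hhead : ∀ x ∈ range n, steepestApprox q ε k (x + 1) = q (x + 1) := fun x hx => by
    simp [steepestApprox, show x + 1 < k by simp at hx; omega]
  rw [sum_range_succ', sum_range_succ', sum_congr rfl hhead]
  simp only [steepestApprox, if_true]
  ring

theorem sum_range_of_lt {m : ℕ} (hk : k ≠ 0) (hkm : k < m) :
    ∑ x ∈ range m, steepestApprox q ε k x = 1 := by
  have htail : ∀ x ∈ Ico (k + 1) m, steepestApprox q ε k x = 0 := fun x hx => by
    simp only [mem_Ico] at hx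
    simp [steepestApprox, show x ≠ 0 by omega, show ¬x < k by omega, show x ≠ k by omega]
  rw [← sum_range_add_sum_Ico _ hkm, sum_eq_zero htail, sum_range_succ,
    sum_range_of_le hk le_rfl]
  simp [steepestApprox, hk]

theorem sub_nonneg_of_ne_zero (hq0 : ∀ x, 0 ≤ q x)
    (hk : 1 - ε < ∑ x ∈ range (k + 1), q x) {x : ℕ} (hx : x ≠ 0) :
    0 ≤ q x - steepestApprox q ε k x := by
  rw [sum_range_succ] at hk
  rw [steepestApprox, if_neg hx]
  split_ifs with _ hxk
  · simp
  · subst hxk; linarith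
  · linarith [hq0 x]

theorem sum_abs_sub_eq {d : ℕ} (hq0 : ∀ x, 0 ≤ q x) (hq1 : ∑ x ∈ range d, q x = 1)
    (hε : 0 ≤ ε) (hk : k ≠ 0) (hkd : k < d) (hk2 : 1 - ε < ∑ x ∈ range (k + 1), q x) :
    ∑ x ∈ range d, |q x - steepestApprox q ε k x| = 2 * ε := by
  have h0 : 0 ∈ range d := mem_range.mpr (by omega)
  have htail : ∑ x ∈ (range d).erase 0, |q x - steepestApprox q ε k x|
      = ∑ x ∈ (range d).erase 0, (q x - steepestApprox q ε k x) :=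
    sum_congr rfl fun x hx => abs_of_nonneg (sub_nonneg_of_ne_zero hq0 hk2 (ne_of_mem_erase hx))
  have htotal : ∑ x ∈ range d, (q x - steepestApprox q ε k x) = 0 := by
    rw [sum_sub_distrib, hq1, sum_range_of_lt hk hkd, sub_self]
  have hzero : steepestApprox q ε k 0 = q 0 + ε := if_pos rfl
  rw [← add_sum_erase _ _ h0, hzero] at htotal
  rw [← add_sum_erase _ _ h0, htail, hzero, sub_add_cancel_left, abs_neg, abs_of_nonneg hε]
  linarith

theorem sum_le_sum_range_card {d : ℕ} {q' : ℕ → ℝ} (hq1 : ∑ x ∈ range d, q x = 1)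
    (hanti : AntitoneOn q (Set.Iio d)) (hk : k ≠ 0) (hq'0 : ∀ x, 0 ≤ q' x)
    (hq'1 : ∑ x ∈ range d, q' x = 1) (hclose : (∑ x ∈ range d, |q x - q' x|) / 2 ≤ ε)
    {S : Finset ℕ} (hS : S ⊆ range d) :
    ∑ x ∈ S, q' x ≤ ∑ x ∈ range #S, steepestApprox q ε k x := by
  rcases le_or_gt #S k with hSk | hkS
  · rcases eq_or_ne #S 0 with hS0 | hS0
    · simp [card_eq_zero.mp hS0]
    have hmoved := two_mul_sum_sub_le_sum_abs_sub hS (hq1.trans hq'1.symm)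
    have hhead := sum_le_sum_range_card_of_antitoneOn hanti hS
    rw [sum_sub_distrib] at hmoved
    rw [sum_range_of_le hS0 hSk]
    linarith
  · rw [sum_range_of_lt hk hkS, ← hq'1]
    exact sum_le_sum_of_subset_of_nonneg hS fun x _ _ => hq'0 x

end steepestApprox

theorem steepest_eps_approximation_general (d : ℕ) (q : ℕ → ℝ)
    (hq0 : ∀ x, 0 ≤ q x) (hq1 : ∑ x ∈ Finset.range d, q x = 1)
    (hqmono : ∀ i j, i ≤ j → j < d → q j ≤ q i)
    (ε : ℝ) (hε0 : 0 ≤ ε)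
    (hfar : (∑ x ∈ Finset.range d, |q x - if x = 0 then 1 else 0|) / 2 > ε)
    (kε : ℕ) (hkd : kε < d)
    (hk1 : ∑ x ∈ Finset.range kε, q x ≤ 1 - ε)
    (hk2 : 1 - ε < ∑ x ∈ Finset.range (kε + 1), q x) :
    let qbar : ℕ → ℝ := fun x =>
      if x = 0 then q 0 + ε
      else if x < kε then q x
      else if x = kε then 1 - ε - ∑ y ∈ Finset.range kε, q y
      else 0
    (∀ x, 0 ≤ qbar x) ∧ (∑ x ∈ Finset.range d, qbar x = 1) ∧
    (∑ x ∈ Finset.range d, |q x - qbar x|) / 2 ≤ ε ∧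
    ∀ q' : ℕ → ℝ, (∀ x, 0 ≤ q' x) → (∑ x ∈ Finset.range d, q' x = 1) →
      (∑ x ∈ Finset.range d, |q x - q' x|) / 2 ≤ ε →
      ∀ S ⊆ Finset.range d, ∑ x ∈ S, q' x ≤ ∑ x ∈ Finset.range S.card, qbar x := by
  intro qbar
  have hanti : AntitoneOn q (Set.Iio d) := fun i _ j hj hij => hqmono i j hij hj
  -- `hfar` says `q 0 < 1 - ε`, so `k_ε = 0` would contradict `hk2`.
  have hk : kε ≠ 0 := by
    rintro rfl
    rw [sum_range_abs_sub_ite_zero hq0 hq1 (by omega)] at hfar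
    rw [zero_add, sum_range_one] at hk2
    linarith
  refine ⟨steepestApprox.nonneg hq0 hε0 hk1, steepestApprox.sum_range_of_lt hk hkd, ?_,
    fun q' hq'0 hq'1 hclose S hS =>
      steepestApprox.sum_le_sum_range_card hq1 hanti hk hq'0 hq'1 hclose hS⟩
  change (∑ x ∈ range d, |q x - steepestApprox q ε kε x|) / 2 ≤ ε
  rw [steepestApprox.sum_abs_sub_eq hq0 hq1 hε0 hk hkd hk2]
  linarith

theorem steepest_eps_approximation (d : ℕ) (hd : 1 ≤ d) (q : ℕ → ℝ)
    (hq0 : ∀ x, 0 ≤ q x) (hq1 : ∑ x ∈ Finset.range d, q x = 1)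
    (hqmono : ∀ i j, i ≤ j → j < d → q j ≤ q i)
    (ε : ℝ) (hε0 : 0 ≤ ε) (hε1 : ε ≤ 1)
    (hfar : (∑ x ∈ Finset.range d, |q x - if x = 0 then 1 else 0|) / 2 > ε)
    (kε : ℕ) (hkd : kε < d)
    (hk1 : ∑ x ∈ Finset.range kε, q x ≤ 1 - ε)
    (hk2 : 1 - ε < ∑ x ∈ Finset.range (kε + 1), q x) :
    let qbar : ℕ → ℝ := fun x =>
      if x = 0 then q 0 + ε
      else if x < kε then q x
      else if x = kε then 1 - ε - ∑ y ∈ Finset.range kε, q y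
      else 0
    (∀ x, 0 ≤ qbar x) ∧ (∑ x ∈ Finset.range d, qbar x = 1) ∧
    (∑ x ∈ Finset.range d, |q x - qbar x|) / 2 ≤ ε ∧
    ∀ q' : ℕ → ℝ, (∀ x, 0 ≤ q' x) → (∑ x ∈ Finset.range d, q' x = 1) →
      (∑ x ∈ Finset.range d, |q x - q' x|) / 2 ≤ ε →
      ∀ S ⊆ Finset.range d, ∑ x ∈ S, q' x ≤ ∑ x ∈ Finset.range S.card, qbar x :=
  steepest_eps_approximation_general d q hq0 hq1 hqmono ε hε0 hfar kε hkd hk1 hk2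
end

section
/- For α < -1 and m ≥ 2, the quantity max over k ∈ [n] of (Σ_{x=⌊k/m⌋·m+1}^{k} x^α)/H_n^{(-α)} is at most (1/H_n^{(-α)})·(1 + (m^{α+1} − 1)/(α+1)), where H_n^{(-α)} = Σ_{x=1}^n x^α. -/
open Finset

lemma div_neg_swap' (u v c : ℝ) : (u - v) / (-c) = (v - u) / c := by
  rw [div_neg, ← neg_div, neg_sub]

lemma rpow_le_telescope {α : ℝ} (hα : α < -1) {x : ℝ} (hx : 2 ≤ x) :
    x ^ α ≤ ((x - 1) ^ (α + 1) - x ^ (α + 1)) / (-(α + 1)) := by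
  have hne : α ≠ -1 := by linarith
  have hmem : (0 : ℝ) ∉ Set.uIcc (x - 1) x := by
    rw [Set.uIcc_of_le (by linarith)]
    intro h
    have := h.1
    simp only [Set.mem_Icc] at h
    linarith [h.1]
  have hint : ∫ t in (x - 1)..x, t ^ α = (x ^ (α + 1) - (x - 1) ^ (α + 1)) / (α + 1) := by
    rw [integral_rpow (Or.inr ⟨hne, hmem⟩)]
  have hle : ∫ _ in (x - 1)..x, x ^ α ≤ ∫ t in (x - 1)..x, t ^ α := by
    apply intervalIntegral.integral_mono_on (by linarith)
      intervalIntegrable_const (intervalIntegral.intervalIntegrable_rpow (Or.inr hmem))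
    intro t ht
    exact Real.rpow_le_rpow_of_nonpos (by linarith [ht.1]) ht.2 (by linarith)
  rw [intervalIntegral.integral_const, hint] at hle
  have : (x - (x - 1)) • x ^ α = x ^ α := by
    rw [smul_eq_mul]; ring
  rw [this] at hle
  have heq : (x ^ (α + 1) - (x - 1) ^ (α + 1)) / (α + 1)
      = ((x - 1) ^ (α + 1) - x ^ (α + 1)) / (-(α + 1)) :=
    (div_neg_swap' _ _ _).symm
  linarith [heq ▸ hle]

lemma sum_rpow_le_telescope {α : ℝ} (hα : α < -1) (M : ℕ) :
    ∑ j ∈ Finset.Icc 2 M, (j : ℝ) ^ α ≤ (1 - (M : ℝ) ^ (α + 1)) / (-(α + 1)) := by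
  have hpos : (0 : ℝ) < -(α + 1) := by linarith
  induction M with
  | zero =>
    rw [show Finset.Icc 2 0 = ∅ from rfl, Finset.sum_empty]
    rw [Nat.cast_zero, Real.zero_rpow (by linarith)]
    positivity
  | succ M ih =>
    rcases Nat.lt_or_ge M 1 with h | h
    · interval_cases M
      simp [Real.one_rpow]
    · rw [Finset.sum_Icc_succ_top (by omega)]
      have hA := rpow_le_telescope hα (x := ((M : ℝ) + 1)) (by
        have : (1 : ℝ) ≤ (M : ℝ) := by exact_mod_cast h
        linarith)
      have hcast : ((M + 1 : ℕ) : ℝ) = (M : ℝ) + 1 := by push_cast; ring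
      rw [hcast]
      have : (M : ℝ) + 1 - 1 = (M : ℝ) := by ring
      rw [this] at hA
      have heq : (1 - (M : ℝ) ^ (α + 1)) / (-(α + 1))
          + ((M : ℝ) ^ (α + 1) - ((M : ℝ) + 1) ^ (α + 1)) / (-(α + 1))
          = (1 - ((M : ℝ) + 1) ^ (α + 1)) / (-(α + 1)) := by
        ring
      linarith

theorem alpha_lt_neg_one_bound (α : ℝ) (hα : α < -1) (m n : ℕ) (hm : 2 ≤ m)
    (hn : 1 ≤ n) (k : ℕ) (hk : k ∈ Finset.Icc 1 n) :
    (∑ x ∈ Finset.Icc (k / m * m + 1) k, (x : ℝ) ^ α) /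
        (∑ x ∈ Finset.Icc 1 n, (x : ℝ) ^ α)
      ≤ (1 / ∑ x ∈ Finset.Icc 1 n, (x : ℝ) ^ α) *
          (1 + ((m : ℝ) ^ (α + 1) - 1) / (α + 1)) := by
  have hD : (0 : ℝ) < ∑ x ∈ Finset.Icc 1 n, (x : ℝ) ^ α := by
    apply Finset.sum_pos
    · intro i hi
      have hi1 : 1 ≤ i := (Finset.mem_Icc.mp hi).1
      exact Real.rpow_pos_of_pos (by exact_mod_cast hi1) α
    · exact ⟨1, Finset.mem_Icc.mpr ⟨le_refl 1, hn⟩⟩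
  set a := k / m with ha
  -- k ≤ a * m + (m - 1)
  have hkle : k ≤ a * m + (m - 1) := by
    have h1 : a * m + k % m = k := by rw [ha, mul_comm]; exact Nat.div_add_mod k m
    have h2 : k % m ≤ m - 1 := Nat.le_pred_of_lt (Nat.mod_lt k (by omega))
    calc k = a * m + k % m := h1.symm
      _ ≤ a * m + (m - 1) := Nat.add_le_add_left h2 _
  -- Step 1: enlarge the interval
  have step1 : (∑ x ∈ Finset.Icc (a * m + 1) k, (x : ℝ) ^ α)
      ≤ ∑ x ∈ Finset.Icc (a * m + 1) (a * m + (m - 1)), (x : ℝ) ^ α := by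
    apply Finset.sum_le_sum_of_subset_of_nonneg
    · exact Finset.Icc_subset_Icc_right hkle
    · intro i _ _
      exact Real.rpow_nonneg (Nat.cast_nonneg i) α
  -- Step 2 & 3: reindex and compare termwise
  have step2 : (∑ x ∈ Finset.Icc (a * m + 1) (a * m + (m - 1)), (x : ℝ) ^ α)
      ≤ ∑ j ∈ Finset.Icc 1 (m - 1), (j : ℝ) ^ α := by
    rw [← Finset.map_add_left_Icc 1 (m - 1) (a * m), Finset.sum_map]
    apply Finset.sum_le_sum
    intro j hj
    have hj1 : 1 ≤ j := (Finset.mem_Icc.mp hj).1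
    simp only [addLeftEmbedding_apply]
    apply Real.rpow_le_rpow_of_nonpos
    · exact_mod_cast hj1
    · exact_mod_cast Nat.le_add_left j (a * m)
    · linarith
  -- Step 4 & 5: bound the model sum
  have step4 : (∑ j ∈ Finset.Icc 1 (m - 1), (j : ℝ) ^ α)
      ≤ 1 + ((m : ℝ) ^ (α + 1) - 1) / (α + 1) := by
    have hins : Finset.Icc 1 (m - 1) = insert 1 (Finset.Icc 2 (m - 1)) := by
      ext x; simp [Finset.mem_Icc, Finset.mem_insert]; omega
    rw [hins, Finset.sum_insert (by simp)]
    have h1 : ((1 : ℕ) : ℝ) ^ α = 1 := by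
      rw [Nat.cast_one, Real.one_rpow]
    rw [h1]
    have hB := sum_rpow_le_telescope hα (m - 1)
    have hm1 : (1 : ℝ) ≤ ((m - 1 : ℕ) : ℝ) := by
      have : 1 ≤ m - 1 := by omega
      exact_mod_cast this
    have hmle : ((m - 1 : ℕ) : ℝ) ≤ (m : ℝ) := by
      exact_mod_cast Nat.sub_le m 1
    have hmono : ((m : ℝ)) ^ (α + 1) ≤ ((m - 1 : ℕ) : ℝ) ^ (α + 1) :=
      Real.rpow_le_rpow_of_nonpos (by linarith) hmle (by linarith)
    have hpos : (0 : ℝ) < -(α + 1) := by linarith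
    have hstep : (1 - ((m - 1 : ℕ) : ℝ) ^ (α + 1)) / (-(α + 1))
        ≤ (1 - (m : ℝ) ^ (α + 1)) / (-(α + 1)) := by gcongr
    have heq : (1 - (m : ℝ) ^ (α + 1)) / (-(α + 1))
        = ((m : ℝ) ^ (α + 1) - 1) / (α + 1) := div_neg_swap' _ _ _
    linarith
  calc (∑ x ∈ Finset.Icc (a * m + 1) k, (x : ℝ) ^ α) /
        (∑ x ∈ Finset.Icc 1 n, (x : ℝ) ^ α)
      ≤ (1 + ((m : ℝ) ^ (α + 1) - 1) / (α + 1)) /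
        (∑ x ∈ Finset.Icc 1 n, (x : ℝ) ^ α) := by
        gcongr
        exact le_trans step1 (le_trans step2 step4)
    _ = (1 / ∑ x ∈ Finset.Icc 1 n, (x : ℝ) ^ α) *
          (1 + ((m : ℝ) ^ (α + 1) - 1) / (α + 1)) := by ring
end

section
/- The van Dam–Hayden family embezzles: lim_{n→∞} max_{k∈[n]} ( Σ_{x=⌊k/m⌋+1}^{k} x^{-1} ) / H_n = 0, where H_n = Σ_{x=1}^n 1/x, for any fixed integer m ≥ 2. -/
open Filter Finset

lemma inner_sum_le (m k : ℕ) (hm : 2 ≤ m) :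
    ∑ x ∈ Finset.Icc (k / m + 1) k, (1 : ℝ) / x ≤ m := by
  have hm0 : 0 < m := by omega
  have hcard : (Finset.Icc (k / m + 1) k).card = k - k / m := by
    rw [Nat.card_Icc]; omega
  have hlt : k < m * (k / m + 1) := by
    have h1 := Nat.div_add_mod k m
    have h2 := Nat.mod_lt k hm0
    rw [Nat.mul_add, Nat.mul_one]
    omega
  calc ∑ x ∈ Finset.Icc (k / m + 1) k, (1 : ℝ) / x
      ≤ ∑ x ∈ Finset.Icc (k / m + 1) k, (1 : ℝ) / ((k / m : ℕ) + 1) := by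
        apply Finset.sum_le_sum
        intro x hx
        have hx1 := (Finset.mem_Icc.mp hx).1
        apply one_div_le_one_div_of_le (by positivity)
        exact_mod_cast hx1
    _ = (k - k / m : ℕ) * ((1 : ℝ) / ((k / m : ℕ) + 1)) := by
        rw [Finset.sum_const, hcard, nsmul_eq_mul]
    _ ≤ m := by
        rw [mul_one_div, div_le_iff₀ (by positivity)]
        calc ((k - k / m : ℕ) : ℝ) ≤ (k : ℝ) := by
              exact_mod_cast Nat.sub_le k (k / m)
          _ ≤ (m : ℝ) * ((k / m : ℕ) + 1) := by exact_mod_cast hlt.le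

lemma harmonic_eq (n : ℕ) :
    ∑ x ∈ Finset.Icc 1 n, (1 : ℝ) / x = ∑ i ∈ Finset.range n, (1 : ℝ) / (i + 1) := by
  induction n with
  | zero => simp
  | succ n ih =>
      rw [Finset.sum_Icc_succ_top (by omega), ih, Finset.sum_range_succ]
      push_cast; ring

theorem vanDamHayden_embezzles (m : ℕ) (hm : 2 ≤ m) :
    Filter.Tendsto
      (fun n : ℕ =>
        (⨆ k ∈ Finset.Icc 1 n, ∑ x ∈ Finset.Icc (k / m + 1) k, (1 : ℝ) / x) /
          ∑ x ∈ Finset.Icc 1 n, (1 : ℝ) / x)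
      Filter.atTop (nhds 0) := by
  have hH : Tendsto (fun n : ℕ => ∑ x ∈ Finset.Icc 1 n, (1 : ℝ) / x) atTop atTop := by
    simp only [harmonic_eq]
    exact Real.tendsto_sum_range_one_div_nat_succ_atTop
  have hsupnn : ∀ n : ℕ, 0 ≤ ⨆ k ∈ Finset.Icc 1 n, ∑ x ∈ Finset.Icc (k / m + 1) k, (1 : ℝ) / x := by
    intro n
    apply Real.iSup_nonneg; intro k
    apply Real.iSup_nonneg; intro _
    positivity
  have hsuple : ∀ n : ℕ, (⨆ k ∈ Finset.Icc 1 n, ∑ x ∈ Finset.Icc (k / m + 1) k, (1 : ℝ) / x) ≤ m := by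
    intro n
    apply Real.iSup_le _ (by positivity)
    intro k
    apply Real.iSup_le _ (by positivity)
    intro _
    exact inner_sum_le m k hm
  have hHev : ∀ᶠ n : ℕ in atTop, 1 ≤ ∑ x ∈ Finset.Icc 1 n, (1 : ℝ) / x :=
    hH.eventually_ge_atTop 1
  have hzero : Tendsto (fun n : ℕ => (m : ℝ) / ∑ x ∈ Finset.Icc 1 n, (1 : ℝ) / x) atTop (nhds 0) :=
    Tendsto.div_atTop tendsto_const_nhds hH
  apply squeeze_zero' ?_ ?_ hzero
  · filter_upwards [hHev] with n hn
    exact div_nonneg (hsupnn n) (by linarith)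
  · filter_upwards [hHev] with n hn
    gcongr
    · exact hsuple n
end

section
/- For α > 0 and m ≥ 2, with a_max = (y+1)(m^{1/α} − 1)/(m^{1+1/α} − 1), one has lim_{y→∞} (∫_{a_max}^{a_max·m} ((y+1−x)^α / y^α) dx)/(∫_1^y ((y+1−x)^α / y^α) dx) = (m−1)·((m−1)/(m^{1+1/α} − 1))^α. -/
/-!
Substituting `u = c - x` turns both integrals into differences of `u ^ (α + 1) / (α + 1)`. With
`q = m ^ (1 / α)` and `r = (m - 1) / (m q - 1)`, the window ends satisfy `c - a_max = c q r` and
`c - m a_max = c r`, and `q ^ (α + 1) = m q` collapses the numerator to `c ^ (α + 1) (m - 1) r ^ α`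
for `c = y + 1`. The denominator is `y ^ (α + 1) - 1`, so the ratio is `(m - 1) r ^ α` times
`(y + 1) ^ (α + 1) / (y ^ (α + 1) - 1)`, which tends to `1`.
-/

open Filter Real Topology intervalIntegral

theorem integral_sub_rpow {r : ℝ} (hr : -1 < r) (c a b : ℝ) :
    ∫ x in a..b, (c - x) ^ r = ((c - a) ^ (r + 1) - (c - b) ^ (r + 1)) / (r + 1) := by
  rw [integral_comp_sub_left (fun u => u ^ r) c, integral_rpow (Or.inl hr)]

/-- The paper's `a_max` for the integrand `(c - x) ^ α`, where `c = y + 1`. -/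
noncomputable def aMax (α m c : ℝ) : ℝ :=
  c * (m ^ (1 / α) - 1) / (m ^ (1 + 1 / α) - 1)

theorem integral_sub_rpow_aMax {α m : ℝ} (hα : 0 < α) (hm : 1 < m) {c : ℝ} (hc : 0 ≤ c) :
    ∫ x in aMax α m c..aMax α m c * m, (c - x) ^ α =
      c ^ (α + 1) * ((m - 1) * ((m - 1) / (m ^ (1 + 1 / α) - 1)) ^ α) / (α + 1) := by
  set q := m ^ (1 / α)
  have hq : 1 < q := one_lt_rpow hm (by positivity)
  have hmq : m ^ (1 + 1 / α) = m * q := by rw [rpow_add (by linarith), rpow_one]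
  have hqα : q ^ (α + 1) = m * q := by
    rw [← rpow_mul (by linarith), show 1 / α * (α + 1) = 1 + 1 / α by field_simp, hmq]
  have ha : aMax α m c = c * (q - 1) / (m * q - 1) := by rw [aMax, hmq]
  rw [hmq, ha]
  have hmq1 : 0 < m * q - 1 := by nlinarith
  set r := (m - 1) / (m * q - 1) with hr_def
  have hr : 0 < r := div_pos (by linarith) hmq1
  have hleft : c - c * (q - 1) / (m * q - 1) = c * (q * r) := by
    rw [hr_def, mul_div_assoc', mul_div_assoc', eq_div_iff hmq1.ne', sub_mul,
      div_mul_cancel₀ _ hmq1.ne']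
    ring
  have hright : c - c * (q - 1) / (m * q - 1) * m = c * r := by
    rw [hr_def, div_mul_eq_mul_div, mul_div_assoc', eq_div_iff hmq1.ne', sub_mul,
      div_mul_cancel₀ _ hmq1.ne']
    ring
  have hr_mul : r * (m * q - 1) = m - 1 := div_mul_cancel₀ _ hmq1.ne'
  rw [integral_sub_rpow (by linarith), hleft, hright, mul_rpow hc (by positivity),
    mul_rpow (by linarith) hr.le, hqα, mul_rpow hc hr.le, rpow_add_one hr.ne']
  linear_combination c ^ (α + 1) * r ^ α * hr_mul / (α + 1)

theorem tendsto_add_one_rpow_div_rpow_sub_one {p : ℝ} (hp : 0 < p) :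
    Tendsto (fun y : ℝ => (y + 1) ^ p / (y ^ p - 1)) atTop (𝓝 1) := by
  have hnum : Tendsto (fun y : ℝ => (1 + y⁻¹) ^ p) atTop (𝓝 1) := by
    have h := (tendsto_const_nhds (x := (1 : ℝ)).add tendsto_inv_atTop_zero).rpow_const
      (p := p) (Or.inl (by norm_num))
    simpa using h
  have hden : Tendsto (fun y : ℝ => 1 - (y ^ p)⁻¹) atTop (𝓝 1) := by
    simpa using tendsto_const_nhds.sub (tendsto_rpow_atTop hp).inv_tendsto_atTop
  have h := hnum.div hden one_ne_zero
  rw [div_one] at h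
  refine h.congr' ?_
  filter_upwards [eventually_gt_atTop 1] with y hy
  have hy0 : 0 < y := by linarith
  have hyp : 1 < y ^ p := one_lt_rpow hy hp
  rw [Pi.div_apply, show 1 + y⁻¹ = (y + 1) / y by field_simp, div_rpow (by linarith) hy0.le]
  field_simp

theorem integral_aMax_div_integral_eq {α m : ℝ} (hα : 0 < α) (hm : 1 < m) {y : ℝ} (hy : 1 < y) :
    (∫ x in aMax α m (y + 1)..aMax α m (y + 1) * m, (y + 1 - x) ^ α / y ^ α) /
        (∫ x in (1 : ℝ)..y, (y + 1 - x) ^ α / y ^ α) =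
      (m - 1) * ((m - 1) / (m ^ (1 + 1 / α) - 1)) ^ α *
        ((y + 1) ^ (α + 1) / (y ^ (α + 1) - 1)) := by
  have hyα : y ^ α ≠ 0 := (rpow_pos_of_pos (by linarith) α).ne'
  have hyp : 1 < y ^ (α + 1) := one_lt_rpow hy (by linarith)
  rw [integral_div, integral_div, div_div_div_cancel_right₀ hyα,
    integral_sub_rpow_aMax hα hm (by linarith), integral_sub_rpow (by linarith),
    add_sub_cancel_right, add_sub_cancel_left, one_rpow]
  field_simp

theorem limit_ratio_pos_alpha (α : ℝ) (hα : 0 < α) (m : ℕ) (hm : 2 ≤ m) :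
    Filter.Tendsto
      (fun y : ℝ =>
        (∫ x in ((y + 1) * ((m : ℝ) ^ (1 / α) - 1) / ((m : ℝ) ^ (1 + 1 / α) - 1))..(
            (y + 1) * ((m : ℝ) ^ (1 / α) - 1) / ((m : ℝ) ^ (1 + 1 / α) - 1) * m),
          (y + 1 - x) ^ α / y ^ α) /
        ∫ x in (1 : ℝ)..y, (y + 1 - x) ^ α / y ^ α)
      Filter.atTop
      (nhds (((m : ℝ) - 1) * (((m : ℝ) - 1) / ((m : ℝ) ^ (1 + 1 / α) - 1)) ^ α)) := by
  have hm' : (1 : ℝ) < m := by exact_mod_cast hm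
  have h := (tendsto_add_one_rpow_div_rpow_sub_one (p := α + 1) (by linarith)).const_mul
    (((m : ℝ) - 1) * (((m : ℝ) - 1) / ((m : ℝ) ^ (1 + 1 / α) - 1)) ^ α)
  rw [mul_one] at h
  refine h.congr' ?_
  filter_upwards [eventually_gt_atTop 1] with y hy
  exact (integral_aMax_div_integral_eq hα hm' hy).symm
end

section
/- Let f : [1,∞) → (0,∞) be continuous with f(x)/x^{α−ε} non-decreasing on [N,∞) for some α−ε > −1 and N ≥ 1. Then for any m > 1, liminf_{y→∞} (∫_{y/m}^y f(x) dx)/(∫_1^y f(x) dx) ≥ 1 − m^{−(α−ε+1)}, provided ∫_N^∞ f(x) dx = ∞. -/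
set_option maxHeartbeats 1600000

open Filter MeasureTheory intervalIntegral Set Real

lemma my_intable {f : ℝ → ℝ} (hcont : ContinuousOn f (Set.Ici (1:ℝ)))
    {a b : ℝ} (ha : 1 ≤ a) (hb : 1 ≤ b) : IntervalIntegrable f volume a b := by
  apply (hcont.mono ?_).intervalIntegrable
  exact fun x hx => le_trans (le_inf ha hb) hx.1


lemma g_cont (β : ℝ) : ContinuousOn (fun x : ℝ => x ^ β) (Set.Ici (1:ℝ)) := by
  apply ContinuousOn.rpow_const continuousOn_id
  intro x hx
  refine Or.inl fun h => ?_
  simp only [id_eq] at h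
  simp only [Set.mem_Ici] at hx
  linarith

lemma key_ineq (f : ℝ → ℝ) (hcont : ContinuousOn f (Set.Ici (1 : ℝ)))
    (hpos : ∀ x ≥ 1, 0 < f x) (β N : ℝ) (hN : 1 ≤ N)
    (hmono : MonotoneOn (fun x => f x / x ^ β) (Set.Ici N))
    (c b : ℝ) (hc : N ≤ c) (hb : c ≤ b) :
    (∫ x in N..c, f x) * (∫ x in N..b, x ^ β) ≤
      (∫ x in N..b, f x) * (∫ x in N..c, x ^ β) := by
  have hc1 : (1:ℝ) ≤ c := hN.trans hc
  have hb1 : (1:ℝ) ≤ b := hc1.trans hb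
  have hc0 : (0:ℝ) < c := by linarith
  set k := f c / c ^ β with hk
  have intf1 : IntervalIntegrable f volume N c := my_intable hcont hN hc1
  have intf2 : IntervalIntegrable f volume c b := my_intable hcont hc1 hb1
  have intg1 : IntervalIntegrable (fun x : ℝ => x ^ β) volume N c := my_intable (g_cont β) hN hc1
  have intg2 : IntervalIntegrable (fun x : ℝ => x ^ β) volume c b := my_intable (g_cont β) hc1 hb1
  have hfk : ∀ x ∈ Set.Icc N c, f x ≤ k * x ^ β := by
    intro x hx
    have hx0 : (0:ℝ) < x := by have := hx.1; linarith
    have := hmono (Set.mem_Ici.2 hx.1) (Set.mem_Ici.2 hc) hx.2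
    exact (div_le_iff₀ (Real.rpow_pos_of_pos hx0 β)).1 this
  have hkf : ∀ x ∈ Set.Icc c b, k * x ^ β ≤ f x := by
    intro x hx
    have hx0 : (0:ℝ) < x := by have := hx.1; linarith
    have := hmono (Set.mem_Ici.2 hc) (Set.mem_Ici.2 (hc.trans hx.1)) hx.1
    exact (le_div_iff₀ (Real.rpow_pos_of_pos hx0 β)).1 this
  have h1 : (∫ x in N..c, f x) ≤ k * ∫ x in N..c, x ^ β := by
    rw [← intervalIntegral.integral_const_mul]
    exact intervalIntegral.integral_mono_on hc intf1 (intg1.const_mul k) hfk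
  have h2 : k * (∫ x in c..b, x ^ β) ≤ ∫ x in c..b, f x := by
    rw [← intervalIntegral.integral_const_mul]
    exact intervalIntegral.integral_mono_on hb (intg2.const_mul k) intf2 hkf
  have hG1 : 0 ≤ ∫ x in N..c, x ^ β := by
    apply intervalIntegral.integral_nonneg hc
    intro x hx; exact Real.rpow_nonneg (by linarith [hx.1]) β
  have hG2 : 0 ≤ ∫ x in c..b, x ^ β := by
    apply intervalIntegral.integral_nonneg hb
    intro x hx; exact Real.rpow_nonneg (by linarith [hx.1]) β
  have hF1 : 0 ≤ ∫ x in N..c, f x := by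
    apply intervalIntegral.integral_nonneg hc
    intro x hx; exact (hpos x (hN.trans hx.1)).le
  have hsg : (∫ x in N..b, x ^ β) = (∫ x in N..c, x ^ β) + ∫ x in c..b, x ^ β :=
    (intervalIntegral.integral_add_adjacent_intervals intg1 intg2).symm
  have hsf : (∫ x in N..b, f x) = (∫ x in N..c, f x) + ∫ x in c..b, f x :=
    (intervalIntegral.integral_add_adjacent_intervals intf1 intf2).symm
  rw [hsg, hsf]
  nlinarith [mul_le_mul_of_nonneg_right h1 hG2, mul_le_mul_of_nonneg_right h2 hG1]

theorem liminf_ratio_lower_bound (f : ℝ → ℝ)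
    (hcont : ContinuousOn f (Set.Ici (1 : ℝ))) (hpos : ∀ x ≥ 1, 0 < f x)
    (α ε : ℝ) (hβ : -1 < α - ε) (N : ℝ) (hN : 1 ≤ N)
    (hmono : MonotoneOn (fun x => f x / x ^ (α - ε)) (Set.Ici N))
    (hdiv : Filter.Tendsto (fun y => ∫ x in N..y, f x) Filter.atTop Filter.atTop)
    (m : ℝ) (hm : 1 < m) :
    1 - m ^ (-(α - ε + 1)) ≤
      Filter.liminf
        (fun y : ℝ => (∫ x in (y / m)..y, f x) / ∫ x in (1 : ℝ)..y, f x)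
        Filter.atTop := by
  have hm0 : (0:ℝ) < m := lt_trans one_pos hm
  set β := α - ε with hβdef
  have hδ : (0:ℝ) < β + 1 := by linarith
  clear_value β
  set L : ℝ := m ^ (-(β + 1)) with hLdef
  have hL1 : L < 1 := Real.rpow_lt_one_of_one_lt_of_neg hm (by linarith)
  have hL0 : 0 < L := Real.rpow_pos_of_pos hm0 _
  clear_value L
  have main : ∀ b : ℝ, b < 1 - L → ∀ᶠ y in Filter.atTop,
      b ≤ (∫ x in (y / m)..y, f x) / ∫ x in (1 : ℝ)..y, f x := by
    intro b hb
    set η := 1 - L - b with hη'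
    clear_value η
    have hη : 0 < η := by linarith
    set C := ∫ x in (1:ℝ)..N, f x with hC'
    clear_value C
    have hC0 : 0 ≤ C := by
      rw [hC']
      exact intervalIntegral.integral_nonneg hN (fun x hx => (hpos x hx.1).le)
    filter_upwards [hdiv.eventually_gt_atTop (C / η), hdiv.eventually_gt_atTop 0,
      Filter.eventually_gt_atTop (N * m)] with y hTCη hT0 hy
    set T := ∫ x in N..y, f x with hT'
    clear_value T
    have hCη : C < η * T := by
      have := (div_lt_iff₀ hη).1 hTCη; linarith [mul_comm T η]
    have hym : N < y / m := (lt_div_iff₀ hm0).2 hy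
    have hyN : N < y := by nlinarith
    have hy1 : (1:ℝ) < y := lt_of_le_of_lt hN hyN
    have hym1 : (1:ℝ) ≤ y / m := le_of_lt (lt_of_le_of_lt hN hym)
    have hymy : y / m < y := by
      rw [div_lt_iff₀ hm0]; nlinarith
    set F1 := ∫ x in N..(y/m), f x with hF1'
    clear_value F1
    have hF10 : 0 ≤ F1 := by
      rw [hF1']
      exact intervalIntegral.integral_nonneg hym.le (fun x hx => (hpos x (hN.trans hx.1)).le)
    -- the key inequality
    have key := key_ineq f hcont hpos β N hN hmono (y/m) y hym.le hymy.le
    have Gc : (∫ x in N..(y/m), x ^ β) = ((y/m) ^ (β+1) - N ^ (β+1)) / (β+1) :=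
      integral_rpow (Or.inl hβ)
    have Gy : (∫ x in N..y, x ^ β) = (y ^ (β+1) - N ^ (β+1)) / (β+1) :=
      integral_rpow (Or.inl hβ)
    have hN0 : (0:ℝ) ≤ N := by linarith
    have hP : 0 < y ^ (β+1) - N ^ (β+1) := by
      have := Real.rpow_lt_rpow hN0 hyN hδ
      linarith
    have hcδ : (y/m) ^ (β+1) = L * y ^ (β+1) := by
      rw [hLdef, Real.div_rpow (by linarith : (0:ℝ) ≤ y) hm0.le,
        Real.rpow_neg hm0.le]
      ring
    have hcge : 0 ≤ (y/m) ^ (β+1) - N ^ (β+1) := by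
      have := Real.rpow_le_rpow hN0 hym.le hδ.le
      linarith
    have key2 : F1 * (y ^ (β+1) - N ^ (β+1)) ≤ T * ((y/m) ^ (β+1) - N ^ (β+1)) := by
      rw [Gc, Gy, ← mul_div_assoc, ← mul_div_assoc, div_le_div_iff₀ hδ hδ] at key
      rw [hF1', hT']
      exact le_of_mul_le_mul_right key hδ
    have hNδ0 : 0 ≤ N ^ (β+1) := Real.rpow_nonneg hN0 _
    have hrle : (y/m) ^ (β+1) - N ^ (β+1) ≤ L * (y ^ (β+1) - N ^ (β+1)) := by
      rw [hcδ]; nlinarith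
    have hF1le : F1 ≤ L * T := by
      have h3 : T * ((y/m) ^ (β+1) - N ^ (β+1)) ≤ T * (L * (y ^ (β+1) - N ^ (β+1))) :=
        mul_le_mul_of_nonneg_left hrle hT0.le
      nlinarith
    -- splitting the integrals
    have hA : (∫ x in (1:ℝ)..(y/m), f x) = C + F1 := by
      rw [hC', hF1']
      exact (intervalIntegral.integral_add_adjacent_intervals
        (my_intable hcont le_rfl hN) (my_intable hcont hN hym1)).symm
    have hD : (∫ x in (1:ℝ)..y, f x) = C + T := by
      rw [hC', hT']
      exact (intervalIntegral.integral_add_adjacent_intervals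
        (my_intable hcont le_rfl hN) (my_intable hcont hN hy1.le)).symm
    have hnum : (∫ x in (y/m)..y, f x) = (C + T) - (C + F1) := by
      have h4 := intervalIntegral.integral_add_adjacent_intervals
        (my_intable hcont le_rfl hym1) (my_intable hcont hym1 (hym1.trans hymy.le))
      rw [← hA, ← hD, ← h4]; ring
    have hD0 : 0 < C + T := by linarith
    rw [hnum, hD, le_div_iff₀ hD0]
    have hb2 : b = 1 - L - η := by rw [hη']; ring
    have hfin : b * (C + T) ≤ T - F1 := by
      have e : b * (C + T) = (1 - L - η) * (C + T) := by rw [← hb2]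
      rw [e]
      nlinarith [hCη, hF1le, mul_nonneg hL0.le hC0, mul_nonneg hη.le hC0]
    linarith
  -- R is eventually ≤ 1, giving coboundedness
  have hub : ∀ᶠ y in Filter.atTop,
      (∫ x in (y / m)..y, f x) / (∫ x in (1 : ℝ)..y, f x) ≤ 1 := by
    filter_upwards [Filter.eventually_gt_atTop (max 1 m)] with y hy
    have hy1 : (1:ℝ) < y := lt_of_le_of_lt (le_max_left _ _) hy
    have hym1 : (1:ℝ) ≤ y / m := by
      rw [le_div_iff₀ hm0]; have := le_max_right (1:ℝ) m; nlinarith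
    have hD0 : 0 < ∫ x in (1:ℝ)..y, f x :=
      intervalIntegral.intervalIntegral_pos_of_pos_on
        (my_intable hcont le_rfl hy1.le) (fun x hx => hpos x hx.1.le) hy1
    rw [div_le_one hD0]
    have hA0 : 0 ≤ ∫ x in (1:ℝ)..(y/m), f x :=
      intervalIntegral.integral_nonneg hym1 (fun x hx => (hpos x hx.1).le)
    have h4 := intervalIntegral.integral_add_adjacent_intervals
      (my_intable hcont le_rfl hym1) (my_intable hcont hym1 hy1.le)
    linarith [h4]
  have hcob : Filter.IsCoboundedUnder (· ≥ ·) Filter.atTop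
      (fun y : ℝ => (∫ x in (y / m)..y, f x) / ∫ x in (1 : ℝ)..y, f x) :=
    Filter.isCoboundedUnder_ge_of_eventually_le Filter.atTop hub
  by_contra hcon
  push_neg at hcon
  set Li := Filter.liminf
      (fun y : ℝ => (∫ x in (y / m)..y, f x) / ∫ x in (1 : ℝ)..y, f x)
      Filter.atTop with hLi
  have hble := Filter.le_liminf_of_le hcob (main ((Li + (1 - L)) / 2) (by linarith))
  rw [← hLi] at hble
  linarith
end

section
/- Let f : [1,∞) → (0,∞) be non-decreasing, and suppose f(x)/e^{kx} is non-decreasing on [N,∞) for some k > 0 and N. Then liminf_{y→∞} (∫_{y−1}^y f(x) dx)/(∫_1^y f(x) dx) ≥ 1 − e^{−k}. -/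
/-!
Write `F y = ∫₁^y f` and `C = ∫₁^N f`. Monotonicity of `f x / e^{kx}` on `[N, ∞)` gives
`f x ≤ e^{-k} f (x + 1)` there, so `∫_N^{y-1} f ≤ e^{-k} ∫_{N+1}^y f ≤ e^{-k} F y`, i.e.
`F (y - 1) ≤ C + e^{-k} F y`. Hence `∫_{y-1}^y f = F y - F (y - 1) ≥ (1 - e^{-k}) F y - C`, and the
ratio is at least `1 - e^{-k} - C / F y`, which tends to `1 - e^{-k}` because `F y ≥ (y - 1) f 1 → ∞`.
-/

open MeasureTheory Filter Set Real

lemma MonotoneOn.intervalIntegrable_of_Ici {f : ℝ → ℝ} {a b c : ℝ} (hf : MonotoneOn f (Ici a))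
    (hb : a ≤ b) (hc : a ≤ c) : IntervalIntegrable f volume b c :=
  (hf.mono fun _ hx => (le_min hb hc).trans hx.1).intervalIntegrable

lemma le_exp_neg_mul_mul_of_monotoneOn_div_exp {g : ℝ → ℝ} {k N x t : ℝ}
    (hg : MonotoneOn (fun x => g x / exp (k * x)) (Ici N)) (hx : N ≤ x) (ht : 0 ≤ t) :
    g x ≤ exp (-(k * t)) * g (x + t) := by
  have h := hg (mem_Ici.2 hx) (mem_Ici.2 (by linarith)) (by linarith : x ≤ x + t)
  rw [div_le_div_iff₀ (exp_pos _) (exp_pos _)] at h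
  have hexp : exp (k * (x + t)) = exp (k * x) * exp (k * t) := by
    rw [← exp_add]; ring_nf
  rw [hexp, ← mul_assoc] at h
  rw [exp_neg, ← div_eq_inv_mul, le_div_iff₀ (exp_pos _)]
  exact le_of_mul_le_mul_right (by linarith) (exp_pos (k * x))

lemma integral_le_exp_neg_mul_integral_add {g : ℝ → ℝ} {k N a b t : ℝ}
    (hg : MonotoneOn (fun x => g x / exp (k * x)) (Ici N))
    (hab_int : IntervalIntegrable g volume a b)
    (hshift_int : IntervalIntegrable g volume (a + t) (b + t))
    (ha : N ≤ a) (hab : a ≤ b) (ht : 0 ≤ t) :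
    ∫ x in a..b, g x ≤ exp (-(k * t)) * ∫ x in (a + t)..(b + t), g x := by
  have hcomp_int : IntervalIntegrable (fun x => g (x + t)) volume a b := by
    simpa using hshift_int.comp_add_right t
  rw [← intervalIntegral.integral_comp_add_right, ← intervalIntegral.integral_const_mul]
  exact intervalIntegral.integral_mono_on hab hab_int (hcomp_int.const_mul _)
    fun x hx => le_exp_neg_mul_mul_of_monotoneOn_div_exp hg (ha.trans hx.1) ht

lemma tendsto_integral_atTop_of_monotoneOn {f : ℝ → ℝ} {a : ℝ} (hf : MonotoneOn f (Ici a))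
    (ha : 0 < f a) : Tendsto (fun y => ∫ x in a..y, f x) atTop atTop := by
  have hlin : Tendsto (fun y => (y - a) * f a) atTop atTop :=
    (tendsto_atTop_add_const_right _ _ tendsto_id).atTop_mul_const ha
  refine tendsto_atTop_mono' _ ?_ hlin
  filter_upwards [eventually_ge_atTop a] with y hy
  simpa using intervalIntegral.integral_mono_on hy intervalIntegrable_const
    (hf.intervalIntegrable_of_Ici le_rfl hy) fun x hx => hf self_mem_Ici hx.1 hx.1

lemma integral_le_integral_of_le_left {f : ℝ → ℝ} {a b c : ℝ} (hf : ∀ x ≥ a, 0 ≤ f x)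
    (hint : IntervalIntegrable f volume a c) (hab : a ≤ b) (hbc : b ≤ c) :
    ∫ x in b..c, f x ≤ ∫ x in a..c, f x :=
  intervalIntegral.integral_mono_interval hab hbc le_rfl
    (ae_restrict_of_forall_mem measurableSet_Ioc fun x hx => hf x hx.1.le) hint

lemma one_sub_exp_neg_mul_integral_sub_le_integral_sub_one {f : ℝ → ℝ} {k N y : ℝ}
    (hpos : ∀ x ≥ 1, 0 < f x) (hmono : MonotoneOn f (Ici 1)) (hN : 1 ≤ N)
    (hratio : MonotoneOn (fun x => f x / exp (k * x)) (Ici N)) (hy : N + 1 ≤ y) :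
    (1 - exp (-k)) * (∫ x in (1 : ℝ)..y, f x) - ∫ x in (1 : ℝ)..N, f x ≤
      ∫ x in (y - 1)..y, f x := by
  have hint : ∀ b c, 1 ≤ b → 1 ≤ c → IntervalIntegrable f volume b c :=
    fun _ _ => hmono.intervalIntegrable_of_Ici
  have hsplit_last : (∫ x in (1 : ℝ)..(y - 1), f x) + ∫ x in (y - 1)..y, f x =
      ∫ x in (1 : ℝ)..y, f x :=
    intervalIntegral.integral_add_adjacent_intervals (hint _ _ le_rfl (by linarith))
      (hint _ _ (by linarith) (by linarith))
  have hsplit_N : (∫ x in (1 : ℝ)..N, f x) + ∫ x in N..(y - 1), f x =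
      ∫ x in (1 : ℝ)..(y - 1), f x :=
    intervalIntegral.integral_add_adjacent_intervals (hint _ _ le_rfl hN)
      (hint _ _ hN (by linarith))
  have hshift : ∫ x in N..(y - 1), f x ≤ exp (-k) * ∫ x in (N + 1)..y, f x := by
    simpa using integral_le_exp_neg_mul_integral_add (a := N) (b := y - 1) (t := 1) hratio
      (hint _ _ hN (by linarith)) (hint _ _ (by linarith) (by linarith)) le_rfl
      (by linarith) zero_le_one
  have htail : ∫ x in (N + 1)..y, f x ≤ ∫ x in (1 : ℝ)..y, f x :=
    integral_le_integral_of_le_left (fun x hx => (hpos x hx).le)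
      (hint _ _ le_rfl (by linarith)) (by linarith) hy
  linarith [mul_le_mul_of_nonneg_left htail (exp_pos (-k)).le]

lemma le_liminf_div_of_mul_sub_le {α : Type*} {l : Filter α} [l.NeBot] {A F : α → ℝ} {c C : ℝ}
    (hF : Tendsto F l atTop) (hlow : ∀ᶠ x in l, c * F x - C ≤ A x)
    (hup : ∀ᶠ x in l, A x ≤ F x) : c ≤ liminf (fun x => A x / F x) l := by
  have hlim : Tendsto (fun x => c - C / F x) l (nhds c) := by
    simpa using tendsto_const_nhds.sub (tendsto_const_nhds.div_atTop hF)
  have hpos : ∀ᶠ x in l, 0 < F x := hF.eventually_gt_atTop 0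
  have hbounds : ∀ᶠ x in l, c - C / F x ≤ A x / F x ∧ A x / F x ≤ 1 := by
    filter_upwards [hlow, hup, hpos] with x hlow hup hpos
    refine ⟨?_, (div_le_one hpos).2 hup⟩
    calc c - C / F x = (c * F x - C) / F x := by field_simp
      _ ≤ A x / F x := div_le_div_of_nonneg_right hlow hpos.le
  rw [← hlim.liminf_eq]
  exact liminf_le_liminf (hbounds.mono fun _ h => h.1) hlim.isBoundedUnder_ge
    (isCoboundedUnder_ge_of_eventually_le l (hbounds.mono fun _ h => h.2))

theorem liminf_ratio_exp_lower_bound_general (f : ℝ → ℝ)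
    (hpos : ∀ x ≥ 1, 0 < f x)
    (hmono : MonotoneOn f (Set.Ici (1 : ℝ)))
    (k : ℝ) (N : ℝ) (hN : 1 ≤ N)
    (hratio : MonotoneOn (fun x => f x / Real.exp (k * x)) (Set.Ici N)) :
    1 - Real.exp (-k) ≤
      Filter.liminf
        (fun y : ℝ => (∫ x in (y - 1)..y, f x) / ∫ x in (1 : ℝ)..y, f x)
        Filter.atTop := by
  refine le_liminf_div_of_mul_sub_le (C := ∫ x in (1 : ℝ)..N, f x)
    (tendsto_integral_atTop_of_monotoneOn hmono (hpos 1 le_rfl)) ?_ ?_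
  · filter_upwards [eventually_ge_atTop (N + 1)] with y hy
    exact one_sub_exp_neg_mul_integral_sub_le_integral_sub_one hpos hmono hN hratio hy
  · filter_upwards [eventually_ge_atTop 2] with y hy
    exact integral_le_integral_of_le_left (fun x hx => (hpos x hx).le)
      (hmono.intervalIntegrable_of_Ici le_rfl (by linarith)) (by linarith) (by linarith)

theorem liminf_ratio_exp_lower_bound (f : ℝ → ℝ)
    (hcont : ContinuousOn f (Set.Ici (1 : ℝ))) (hpos : ∀ x ≥ 1, 0 < f x)
    (hmono : MonotoneOn f (Set.Ici (1 : ℝ)))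
    (k : ℝ) (hk : 0 < k) (N : ℝ) (hN : 1 ≤ N)
    (hratio : MonotoneOn (fun x => f x / Real.exp (k * x)) (Set.Ici N)) :
    1 - Real.exp (-k) ≤
      Filter.liminf
        (fun y : ℝ => (∫ x in (y - 1)..y, f x) / ∫ x in (1 : ℝ)..y, f x)
        Filter.atTop :=
  liminf_ratio_exp_lower_bound_general f hpos hmono k N hN hratio
end
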